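/- arXiv:2203.07797 — 4 statements merged into one kernel-verified Lean document; each statement's English description precedes it below -/
import Mathlib

section
/- For real numbers x_1,...,x_N and any integer k with 2 ≤ k ≤ N, the sum over ordered pairs i≠j of e_{k-1}^{N-1}(x with coordinates i removed)/(x_i - x_j) equals -((N-k+2)(N-k+1)/2)·e_{k-2}^N(x), where e_n^m denotes the elementary symmetric polynomial of degree n in m variables, provided all x_i are pairwise distinct. -/
/-!
Swapping `i` and `j` and averaging, each pair `{i, j}` contributes
`(e_{k-1}(x without i) - e_{k-1}(x without j)) / (x_i - x_j) = -e_{k-2}(x without i, j)`,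
so no denominators remain. Summing `e_{k-2}` over ordered pairs of removed indices counts
each `(k-2)`-subset once for every ordered pair outside it, i.e. `(N-k+2)(N-k+1)` times.
-/

open Finset

/-- The elementary symmetric polynomial of degree `k` in the variables indexed by `S`. -/
noncomputable def esym {N : ℕ} (k : ℕ) (S : Finset (Fin N)) (x : Fin N → ℝ) : ℝ :=
  ∑ s ∈ Finset.powersetCard k S, ∏ i ∈ s, x i

lemma sum_sum_erase_comm {ι M : Type*} [DecidableEq ι] [AddCommMonoid M] (S : Finset ι)
    (f : ι → ι → M) :
    ∑ i ∈ S, ∑ j ∈ S.erase i, f i j = ∑ i ∈ S, ∑ j ∈ S.erase i, f j i :=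
  sum_comm' fun i j => by simp only [mem_erase]; tauto

section

variable {N : ℕ} (x : Fin N → ℝ)

lemma esym_insert {m : ℕ} {a : Fin N} {S : Finset (Fin N)} (ha : a ∉ S) :
    esym (m + 1) (insert a S) x = esym (m + 1) S x + x a * esym m S x := by
  simp only [esym, ← Finset.esymm_map_val, Finset.insert_val_of_notMem ha, Multiset.map_cons,
    Multiset.esymm, Multiset.powersetCard_cons, Multiset.map_add, Multiset.sum_add,
    Multiset.map_map, Function.comp_def, Multiset.prod_cons, Multiset.sum_map_mul_left]

lemma esym_erase_sub_esym_erase {m : ℕ} {S : Finset (Fin N)} {i j : Fin N}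
    (hi : i ∈ S) (hj : j ∈ S) (hij : i ≠ j) :
    esym (m + 1) (S.erase i) x - esym (m + 1) (S.erase j) x
      = (x j - x i) * esym m ((S.erase i).erase j) x := by
  set T := (S.erase i).erase j
  have hiT : i ∉ T := fun h => notMem_erase i S (mem_of_mem_erase h)
  have hSi : S.erase i = insert j T := (insert_erase (mem_erase.2 ⟨hij.symm, hj⟩)).symm
  have hSj : S.erase j = insert i T := by
    rw [show T = (S.erase j).erase i from erase_right_comm, insert_erase (mem_erase.2 ⟨hij, hi⟩)]
  rw [hSi, hSj, esym_insert x (notMem_erase j _), esym_insert x hiT]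
  ring

lemma esym_erase_eq_sum_ite (m : ℕ) (S : Finset (Fin N)) (i : Fin N) :
    esym m (S.erase i) x = ∑ t ∈ powersetCard m S, if i ∈ t then 0 else ∏ a ∈ t, x a := by
  rw [sum_ite, sum_const_zero, zero_add, esym]
  congr 1
  ext t
  simp only [mem_filter, mem_powersetCard, subset_erase]
  tauto

lemma sum_esym_erase (m : ℕ) (S : Finset (Fin N)) :
    ∑ i ∈ S, esym m (S.erase i) x = (#S - m : ℝ) * esym m S x := by
  simp_rw [esym_erase_eq_sum_ite, esym, mul_sum]
  rw [sum_comm]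
  refine sum_congr rfl fun t ht => ?_
  obtain ⟨htS, rfl⟩ := mem_powersetCard.1 ht
  rw [sum_ite, sum_const_zero, zero_add, sum_const, nsmul_eq_mul, filter_notMem_eq_sdiff,
    card_sdiff_of_subset htS, Nat.cast_sub (card_le_card htS)]

lemma sum_sum_esym_erase_erase (m : ℕ) (S : Finset (Fin N)) :
    ∑ i ∈ S, ∑ j ∈ S.erase i, esym m ((S.erase i).erase j) x
      = (#S - m : ℝ) * (#S - 1 - m) * esym m S x := by
  have hcard : ∀ i ∈ S, (#(S.erase i) : ℝ) = #S - 1 := fun i hi => by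
    rw [card_erase_of_mem hi, Nat.cast_sub (one_le_card.2 ⟨i, hi⟩), Nat.cast_one]
  rw [sum_congr rfl fun i hi => by rw [sum_esym_erase, hcard i hi], ← mul_sum, sum_esym_erase]
  ring

end

theorem stmt0_general {N : ℕ} (x : Fin N → ℝ)
    (hdist : ∀ i j : Fin N, i ≠ j → x i ≠ x j)
    (k : ℕ) (hk2 : 2 ≤ k) :
    ∑ i : Fin N, ∑ j ∈ (univ : Finset (Fin N)).erase i,
        esym (k - 1) ((univ : Finset (Fin N)).erase i) x / (x i - x j)
      = -(((N : ℝ) - k + 2) * ((N : ℝ) - k + 1) / 2) * esym (k - 2) univ x := by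
  obtain ⟨m, rfl⟩ : ∃ m, k = m + 2 := ⟨k - 2, by omega⟩
  simp only [Nat.add_sub_cancel, show m + 2 - 1 = m + 1 from rfl]
  set f : Fin N → Fin N → ℝ := fun i j => esym (m + 1) (univ.erase i) x / (x i - x j)
  have hpair : ∀ i, ∀ j ∈ univ.erase i, f i j + f j i = -esym m ((univ.erase i).erase j) x := by
    intro i j hj
    have hij : i ≠ j := (ne_of_mem_erase hj).symm
    have hd : x i - x j ≠ 0 := sub_ne_zero.2 (hdist i j hij)
    have hdiff := esym_erase_sub_esym_erase (m := m) x (mem_univ i) (mem_univ j) hij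
    have hji : f j i = -(esym (m + 1) (univ.erase j) x / (x i - x j)) := by
      simp only [f]
      rw [← div_neg, neg_sub]
    rw [hji, ← sub_eq_add_neg, div_sub_div_same, hdiff, ← neg_sub (x i), neg_mul, neg_div,
      mul_div_cancel_left₀ _ hd]
  have h2 : 2 * ∑ i, ∑ j ∈ univ.erase i, f i j
      = -∑ i, ∑ j ∈ univ.erase i, esym m ((univ.erase i).erase j) x := by
    rw [two_mul]
    nth_rewrite 2 [sum_sum_erase_comm]
    simp only [← sum_add_distrib, ← sum_neg_distrib]
    exact sum_congr rfl fun i _ => sum_congr rfl (hpair i)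
  rw [sum_sum_esym_erase_erase, card_univ, Fintype.card_fin] at h2
  push_cast
  linear_combination h2 / 2

theorem stmt0 {N : ℕ} (x : Fin N → ℝ)
    (hdist : ∀ i j : Fin N, i ≠ j → x i ≠ x j)
    (k : ℕ) (hk2 : 2 ≤ k) (hkN : k ≤ N) :
    ∑ i : Fin N, ∑ j ∈ (univ : Finset (Fin N)).erase i,
        esym (k - 1) ((univ : Finset (Fin N)).erase i) x / (x i - x j)
      = -(((N : ℝ) - k + 2) * ((N : ℝ) - k + 1) / 2) * esym (k - 2) univ x :=
  stmt0_general x hdist k hk2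
end

section
/- Let λ ∈ ℝ, g, h : [0,∞) → ℝ continuous with h(0)=0, and f continuous satisfying f(t) - f(0) = ∫_0^t (λ f(s) + g(s)) ds + h(t) for all t ≥ 0. Then f(t) = e^{λt}( f(0) + ∫_0^t e^{-λs}(g(s) + λ h(s)) ds ) + h(t). -/
/-!
Since `h 0 = 0`, the function `u = f - h` solves the unperturbed equation
`u t - u 0 = ∫₀ᵗ (λ u + (g + λ h))`, so `u' = λ u + (g + λ h)` on `(0, ∞)`. With the
integrating factor `e^{-λs}`, the function `e^{-λs} u s` is an antiderivative of
`e^{-λs} (g s + λ h s)`, and the fundamental theorem of calculus gives the formula.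
-/

open Set intervalIntegral

theorem hasDerivAt_of_sub_eq_integral {u φ : ℝ → ℝ} (hφ : ContinuousOn φ (Ici 0))
    (heq : ∀ t : ℝ, 0 ≤ t → u t - u 0 = ∫ s in (0:ℝ)..t, φ s) {x : ℝ} (hx : 0 < x) :
    HasDerivAt u (φ x) x := by
  have hint : IntervalIntegrable φ MeasureTheory.volume 0 x :=
    (hφ.mono Icc_subset_Ici_self).intervalIntegrable_of_Icc hx.le
  have hmeas : StronglyMeasurableAtFilter φ (nhds x) :=
    (hφ.mono Ioi_subset_Ici_self).stronglyMeasurableAtFilter isOpen_Ioi _ hx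
  have hI := (integral_hasDerivAt_right hint hmeas (hφ.continuousAt (Ici_mem_nhds hx))).const_add
    (u 0)
  refine hI.congr_of_eventuallyEq ?_
  filter_upwards [Ioi_mem_nhds hx] with y hy
  linarith [heq y (le_of_lt hy)]

theorem eq_exp_mul_add_integral_of_sub_eq_integral (lam : ℝ) {u k : ℝ → ℝ}
    (hu : ContinuousOn u (Ici 0)) (hk : ContinuousOn k (Ici 0))
    (heq : ∀ t : ℝ, 0 ≤ t → u t - u 0 = ∫ s in (0:ℝ)..t, (lam * u s + k s))
    {t : ℝ} (ht : 0 ≤ t) :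
    u t = Real.exp (lam * t) * (u 0 + ∫ s in (0:ℝ)..t, Real.exp (-lam * s) * k s) := by
  have hexp : Continuous fun s : ℝ => Real.exp (-lam * s) := by fun_prop
  have hderiv (x : ℝ) (hx : x ∈ Ioo 0 t) :
      HasDerivAt (fun s => Real.exp (-lam * s) * u s) (Real.exp (-lam * x) * k x) x := by
    have hu' := hasDerivAt_of_sub_eq_integral (φ := fun s => lam * u s + k s)
      ((continuousOn_const.mul hu).add hk) heq hx.1
    have hexp' : HasDerivAt (fun s : ℝ => Real.exp (-lam * s)) (Real.exp (-lam * x) * -lam) x :=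
      ((hasDerivAt_id x).const_mul (-lam)).exp.congr_deriv (by simp)
    exact (hexp'.mul hu').congr_deriv (by ring)
  have hftc : ∫ s in (0:ℝ)..t, Real.exp (-lam * s) * k s
      = Real.exp (-lam * t) * u t - u 0 := by
    rw [integral_eq_sub_of_hasDeriv_right_of_le ht
      (hexp.continuousOn.mul (hu.mono Icc_subset_Ici_self))
      (fun x hx => (hderiv x hx).hasDerivWithinAt)
      ((hexp.continuousOn.mul (hk.mono Icc_subset_Ici_self)).intervalIntegrable_of_Icc ht)]
    simp
  rw [hftc, add_sub_cancel, ← mul_assoc, ← Real.exp_add]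
  simp

theorem stmt6 (lam : ℝ) (f g h : ℝ → ℝ)
    (hf : ContinuousOn f (Set.Ici 0)) (hg : ContinuousOn g (Set.Ici 0))
    (hh : ContinuousOn h (Set.Ici 0)) (hh0 : h 0 = 0)
    (heq : ∀ t : ℝ, 0 ≤ t →
      f t - f 0 = (∫ s in (0:ℝ)..t, (lam * f s + g s)) + h t) :
    ∀ t : ℝ, 0 ≤ t →
      f t = Real.exp (lam * t) *
          (f 0 + ∫ s in (0:ℝ)..t, Real.exp (-lam * s) * (g s + lam * h s)) + h t := by
  have hreduced : ∀ t : ℝ, 0 ≤ t → (f - h) t - (f - h) 0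
      = ∫ s in (0:ℝ)..t, (lam * (f - h) s + (g s + lam * h s)) := by
    intro t ht
    have hintegrand :
        (fun s => lam * (f - h) s + (g s + lam * h s)) = fun s => lam * f s + g s := by
      ext s; simp only [Pi.sub_apply]; ring
    rw [hintegrand, Pi.sub_apply, Pi.sub_apply, hh0]
    linarith [heq t ht]
  intro t ht
  have hsol := eq_exp_mul_add_integral_of_sub_eq_integral lam (k := fun s => g s + lam * h s)
    (hf.sub hh) (hg.add (continuousOn_const.mul hh)) hreduced ht
  rw [Pi.sub_apply, Pi.sub_apply, hh0, sub_zero] at hsol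
  linarith
end

section
/- Define the sequence of functions S_l : [0,∞) → ℝ by S_0 ≡ 1, S_1 ≡ 0, and for l ≥ 2 by S_l(t) = e^{-lt}·4l·(1+C)^{-3}·∫_0^t e^{ls} ∑_{k=0}^{l-2} S_k(s) S_{l-2-k}(s) ds, where C ≥ 0 is a constant. Then for each l the limit S_l(∞) := lim_{t→∞} S_l(t) exists and satisfies S_0(∞)=1, S_1(∞)=0, and S_l(∞) = (4/(1+C)^3) ∑_{k=0}^{l-2} S_k(∞) S_{l-2-k}(∞) for l ≥ 2; consequently S_{2m}(∞) = (4/(1+C)^3)^m · Cat(m) where Cat(m) is the m-th Catalan number, and S_l(∞) = 0 for odd l. -/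
open Finset Filter

section Aux

open MeasureTheory Set Real

private lemma int_exp_aux (a : ℝ) (ha : a ≠ 0) (u v : ℝ) :
    ∫ s in u..v, Real.exp (a * s) = (Real.exp (a * v) - Real.exp (a * u)) / a := by
  rw [intervalIntegral.integral_comp_mul_left (fun x => Real.exp x) ha, integral_exp,
    smul_eq_mul]
  field_simp

private lemma cont_prim_aux (h : ℝ → ℝ) (hh : ContinuousOn h (Set.Ici 0)) :
    ContinuousOn (fun t => ∫ s in (0:ℝ)..t, h s) (Set.Ici 0) := by
  intro t ht
  have ht' : (0:ℝ) ≤ t := ht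
  have huIcc : Set.uIcc (0:ℝ) (t+1) = Set.Icc 0 (t+1) := Set.uIcc_of_le (by linarith)
  have hsub : Set.uIcc (0:ℝ) (t+1) ⊆ Set.Ici 0 := by
    rw [huIcc]; exact Set.Icc_subset_Ici_self
  have hint : MeasureTheory.IntegrableOn h (Set.uIcc 0 (t+1)) :=
    (hh.mono hsub).integrableOn_compact isCompact_uIcc
  have h1 := intervalIntegral.continuousOn_primitive_interval hint
  have h2 : ContinuousWithinAt (fun u => ∫ s in (0:ℝ)..u, h s) (Set.uIcc 0 (t+1)) t :=
    h1 t (by rw [huIcc]; exact ⟨ht', by linarith⟩)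
  apply h2.mono_of_mem_nhdsWithin
  rw [huIcc, ← Set.Ici_inter_Iic]
  exact Filter.inter_mem self_mem_nhdsWithin
    (mem_nhdsWithin_of_mem_nhds (Iic_mem_nhds (by linarith)))

private lemma exp_avg_aux (a A : ℝ) (ha : 0 < a) (g : ℝ → ℝ)
    (hg : ContinuousOn g (Set.Ici 0))
    (hA : Tendsto g atTop (nhds A)) :
    Tendsto (fun t => Real.exp (-(a * t)) * ∫ s in (0:ℝ)..t, Real.exp (a * s) * g s)
      atTop (nhds (A / a)) := by
  have ha' : a ≠ 0 := ne_of_gt ha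
  have hce : Continuous fun s : ℝ => Real.exp (a * s) := by continuity
  have hgint : ∀ u v : ℝ, 0 ≤ u → 0 ≤ v →
      IntervalIntegrable (fun s => Real.exp (a * s) * (g s - A)) volume u v := by
    intro u v hu hv
    apply ContinuousOn.intervalIntegrable
    apply (hce.continuousOn.mul (hg.sub continuousOn_const)).mono
    intro x hx
    exact le_trans (le_min hu hv) hx.1
  have hexp : Tendsto (fun t => Real.exp (-(a * t))) atTop (nhds 0) :=
    Real.tendsto_exp_neg_atTop_nhds_zero.comp (tendsto_id.const_mul_atTop ha)
  -- the main estimate : the "centered" part tends to 0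
  have hD0 : Tendsto (fun t => Real.exp (-(a * t)) *
      ∫ s in (0:ℝ)..t, Real.exp (a * s) * (g s - A)) atTop (nhds 0) := by
    rw [NormedAddCommGroup.tendsto_nhds_zero]
    intro ε hε
    obtain ⟨N, hN⟩ := Metric.tendsto_atTop.mp hA (a * ε / 2) (by positivity)
    set T : ℝ := max N 0 with hTdef
    have hT0 : (0:ℝ) ≤ T := le_max_right _ _
    set M : ℝ := |∫ s in (0:ℝ)..T, Real.exp (a * s) * (g s - A)| with hMdef
    have htail : ∀ᶠ t in atTop, Real.exp (-(a * t)) * M < ε / 2 := by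
      have h0 : Tendsto (fun t => Real.exp (-(a * t)) * M) atTop (nhds 0) := by
        simpa using hexp.mul_const M
      exact h0.eventually_lt_const (by positivity)
    filter_upwards [eventually_ge_atTop T, htail] with t hTt hMt
    have ht0 : (0:ℝ) ≤ t := le_trans hT0 hTt
    have hsplit : (∫ s in (0:ℝ)..t, Real.exp (a * s) * (g s - A))
        = (∫ s in (0:ℝ)..T, Real.exp (a * s) * (g s - A))
          + ∫ s in T..t, Real.exp (a * s) * (g s - A) :=
      (intervalIntegral.integral_add_adjacent_intervals
        (hgint 0 T le_rfl hT0) (hgint T t hT0 ht0)).symm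
    have hbound : |∫ s in T..t, Real.exp (a * s) * (g s - A)|
        ≤ (a * ε / 2) * ((Real.exp (a * t) - Real.exp (a * T)) / a) := by
      calc |∫ s in T..t, Real.exp (a * s) * (g s - A)|
          ≤ ∫ s in T..t, |Real.exp (a * s) * (g s - A)| :=
            intervalIntegral.abs_integral_le_integral_abs hTt
        _ ≤ ∫ s in T..t, (a * ε / 2) * Real.exp (a * s) := by
            apply intervalIntegral.integral_mono_on hTt ((hgint T t hT0 ht0).abs)
              (Continuous.intervalIntegrable (by continuity) _ _)
            intro s hs
            have hsN : N ≤ s := le_trans (le_max_left _ _) hs.1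
            have hgs : |g s - A| ≤ a * ε / 2 := by
              have := hN s hsN
              rw [Real.dist_eq] at this
              linarith
            rw [abs_mul, abs_of_nonneg (Real.exp_nonneg _)]
            calc Real.exp (a * s) * |g s - A| ≤ Real.exp (a * s) * (a * ε / 2) :=
                  mul_le_mul_of_nonneg_left hgs (Real.exp_nonneg _)
              _ = (a * ε / 2) * Real.exp (a * s) := by ring
        _ = (a * ε / 2) * ((Real.exp (a * t) - Real.exp (a * T)) / a) := by
            rw [intervalIntegral.integral_const_mul, int_exp_aux a ha']
    have hept : (0:ℝ) < Real.exp (-(a * t)) := Real.exp_pos _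
    have key : ‖Real.exp (-(a * t)) * ∫ s in (0:ℝ)..t, Real.exp (a * s) * (g s - A)‖
        ≤ Real.exp (-(a * t)) * M + ε / 2 := by
      rw [Real.norm_eq_abs, abs_mul, abs_of_nonneg (Real.exp_nonneg _)]
      have h1 : |∫ s in (0:ℝ)..t, Real.exp (a * s) * (g s - A)|
          ≤ M + (a * ε / 2) * ((Real.exp (a * t) - Real.exp (a * T)) / a) := by
        rw [hsplit]
        exact le_trans (abs_add_le _ _) (add_le_add_right hbound _)
      calc Real.exp (-(a * t)) * |∫ s in (0:ℝ)..t, Real.exp (a * s) * (g s - A)|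
          ≤ Real.exp (-(a * t)) * (M + (a * ε / 2) * ((Real.exp (a * t) - Real.exp (a * T)) / a)) :=
            mul_le_mul_of_nonneg_left h1 (Real.exp_nonneg _)
        _ = Real.exp (-(a * t)) * M
            + (ε / 2) * (Real.exp (-(a * t)) * Real.exp (a * t))
            - (ε / 2) * (Real.exp (-(a * t)) * Real.exp (a * T)) := by
            field_simp
            ring
        _ ≤ Real.exp (-(a * t)) * M + ε / 2 := by
            rw [← Real.exp_add]
            simp only [neg_add_cancel, Real.exp_zero, mul_one]
            have : 0 ≤ (ε / 2) * (Real.exp (-(a * t)) * Real.exp (a * T)) := by positivity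
            linarith
    calc ‖Real.exp (-(a * t)) * ∫ s in (0:ℝ)..t, Real.exp (a * s) * (g s - A)‖
        ≤ Real.exp (-(a * t)) * M + ε / 2 := key
      _ < ε / 2 + ε / 2 := by linarith
      _ = ε := by ring
  -- decomposition identity
  have heq : ∀ t : ℝ, 0 ≤ t →
      Real.exp (-(a * t)) * (∫ s in (0:ℝ)..t, Real.exp (a * s) * (g s - A))
        + (A / a - (A / a) * Real.exp (-(a * t)))
      = Real.exp (-(a * t)) * ∫ s in (0:ℝ)..t, Real.exp (a * s) * g s := by
    intro t ht
    have hi2 : IntervalIntegrable (fun s => A * Real.exp (a * s)) volume 0 t :=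
      Continuous.intervalIntegrable (by continuity) _ _
    have h1 : (∫ s in (0:ℝ)..t, Real.exp (a * s) * g s)
        = (∫ s in (0:ℝ)..t, Real.exp (a * s) * (g s - A))
          + A * ((Real.exp (a * t) - 1) / a) := by
      have hfun : (fun s => Real.exp (a * s) * g s)
          = fun s => Real.exp (a * s) * (g s - A) + A * Real.exp (a * s) := by
        funext s; ring
      rw [hfun, intervalIntegral.integral_add (hgint 0 t le_rfl ht) hi2,
        intervalIntegral.integral_const_mul, int_exp_aux a ha']
      simp [Real.exp_zero]
    rw [h1]
    have h2 : Real.exp (-(a * t)) * Real.exp (a * t) = 1 := by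
      rw [← Real.exp_add]; simp
    linear_combination (-(A / a)) * h2
  have hrhs : Tendsto (fun t => Real.exp (-(a * t)) *
      (∫ s in (0:ℝ)..t, Real.exp (a * s) * (g s - A))
      + (A / a - (A / a) * Real.exp (-(a * t)))) atTop (nhds (A / a)) := by
    have h3 : Tendsto (fun t => A / a - (A / a) * Real.exp (-(a * t))) atTop (nhds (A / a)) := by
      have := tendsto_const_nhds (x := A / a) (f := atTop (α := ℝ)) |>.sub
        ((hexp.const_mul (A / a)))
      simpa using this
    simpa using hD0.add h3
  apply hrhs.congr'
  filter_upwards [eventually_ge_atTop (0:ℝ)] with t ht using heq t ht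

private lemma sum_even_aux (f : ℕ → ℝ) (hodd : ∀ k, k % 2 = 1 → f k = 0) (m : ℕ) :
    ∑ k ∈ range (2 * m + 1), f k = ∑ i ∈ range (m + 1), f (2 * i) := by
  induction m with
  | zero => simp
  | succ n ih =>
    have h1 : 2 * (n + 1) + 1 = (2 * n + 1) + 1 + 1 := by ring
    rw [h1, sum_range_succ, sum_range_succ, ih, sum_range_succ (fun i => f (2 * i)) (n + 1),
      hodd (2 * n + 1) (by omega)]
    have h2 : 2 * n + 1 + 1 = 2 * (n + 1) := by ring
    rw [h2]; ring

private noncomputable def Lf (c : ℝ) (l : ℕ) : ℝ :=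
  if l % 2 = 0 then c ^ (l / 2) * (catalan (l / 2) : ℝ) else 0

private lemma Lf_odd (c : ℝ) (l : ℕ) (h : l % 2 = 1) : Lf c l = 0 := by
  simp [Lf, h]

private lemma Lf_even (c : ℝ) (m : ℕ) : Lf c (2 * m) = c ^ m * (catalan m : ℝ) := by
  simp [Lf, Nat.mul_div_cancel_left m (by norm_num : 0 < 2)]

private lemma catalan_cast (m : ℕ) :
    (catalan (m + 1) : ℝ) = ∑ i ∈ range (m + 1), (catalan i : ℝ) * (catalan (m - i) : ℝ) := by
  rw [catalan_succ]
  push_cast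
  rw [← Fin.sum_univ_eq_sum_range (fun i => (catalan i : ℝ) * (catalan (m - i) : ℝ)) (m + 1)]

private lemma Lf_rec (c : ℝ) (l : ℕ) (hl : 2 ≤ l) :
    Lf c l = c * ∑ k ∈ range (l - 1), Lf c k * Lf c (l - 2 - k) := by
  obtain ⟨m, rfl | rfl⟩ : ∃ m, l = 2 * m + 2 ∨ l = 2 * m + 3 := by
    rcases Nat.even_or_odd l with ⟨m, hm⟩ | ⟨m, hm⟩
    · exact ⟨m - 1, Or.inl (by omega)⟩
    · exact ⟨m - 1, Or.inr (by omega)⟩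
  · -- even case
    have hran : 2 * m + 2 - 1 = 2 * m + 1 := by omega
    rw [hran]
    have hterm : ∀ k, 2 * m + 2 - 2 - k = 2 * m - k := by omega
    simp only [hterm]
    have hvan : ∀ k, k % 2 = 1 → Lf c k * Lf c (2 * m - k) = 0 := by
      intro k hk; rw [Lf_odd c k hk, zero_mul]
    rw [sum_even_aux _ hvan m]
    have hsum : ∑ i ∈ range (m + 1), Lf c (2 * i) * Lf c (2 * m - 2 * i)
        = c ^ m * (catalan (m + 1) : ℝ) := by
      rw [catalan_cast, Finset.mul_sum]
      apply Finset.sum_congr rfl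
      intro i hi
      have hi' : i ≤ m := by simpa [Nat.lt_succ_iff] using Finset.mem_range.mp hi
      have h2 : 2 * m - 2 * i = 2 * (m - i) := by omega
      rw [h2, Lf_even, Lf_even]
      have h3 : c ^ i * c ^ (m - i) = c ^ m := by
        rw [← pow_add]; congr 1; omega
      rw [← h3]; ring
    rw [hsum]
    have h3 : 2 * m + 2 = 2 * (m + 1) := by ring
    rw [h3, Lf_even, pow_succ]
    ring
  · -- odd case
    have hran : 2 * m + 3 - 1 = 2 * m + 2 := by omega
    rw [hran, Lf_odd c (2 * m + 3) (by omega)]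
    rw [Finset.sum_eq_zero, mul_zero]
    intro k hk
    have hk' : k < 2 * m + 2 := Finset.mem_range.mp hk
    rcases Nat.even_or_odd k with ⟨j, hj⟩ | ⟨j, hj⟩
    · have : (2 * m + 3 - 2 - k) % 2 = 1 := by omega
      rw [Lf_odd c _ this, mul_zero]
    · rw [Lf_odd c k (by omega), zero_mul]

end Aux

theorem stmt7 (C : ℝ) (hC : 0 ≤ C) (S : ℕ → ℝ → ℝ)
    (hS0 : ∀ t : ℝ, 0 ≤ t → S 0 t = 1)
    (hS1 : ∀ t : ℝ, 0 ≤ t → S 1 t = 0)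
    (hSrec : ∀ l : ℕ, 2 ≤ l → ∀ t : ℝ, 0 ≤ t →
      S l t = Real.exp (-(l : ℝ) * t) * (4 * l / (1 + C) ^ 3) *
        ∫ s in (0:ℝ)..t, Real.exp ((l : ℝ) * s) *
          ∑ k ∈ range (l - 1), S k s * S (l - 2 - k) s) :
    ∃ L : ℕ → ℝ,
      (∀ l : ℕ, Tendsto (fun t => S l t) atTop (nhds (L l))) ∧
      L 0 = 1 ∧ L 1 = 0 ∧
      (∀ l : ℕ, 2 ≤ l →
        L l = 4 / (1 + C) ^ 3 * ∑ k ∈ range (l - 1), L k * L (l - 2 - k)) ∧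
      (∀ m : ℕ, L (2 * m) = (4 / (1 + C) ^ 3) ^ m * catalan m) ∧
      (∀ l : ℕ, Odd l → L l = 0) := by
  have hCpos : (0:ℝ) < (1 + C) ^ 3 := by positivity
  set c : ℝ := 4 / (1 + C) ^ 3 with hc
  -- main induction
  have key : ∀ l : ℕ, ContinuousOn (S l) (Set.Ici 0) ∧
      Tendsto (S l) atTop (nhds (Lf c l)) := by
    intro l
    induction l using Nat.strong_induction_on with
    | _ l ih =>
      match l, ih with
      | 0, _ =>
        constructor
        · exact continuousOn_const.congr fun t ht => hS0 t ht
        · have heq : (fun t : ℝ => (1:ℝ)) =ᶠ[atTop] S 0 := by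
            filter_upwards [eventually_ge_atTop (0:ℝ)] with t ht using (hS0 t ht).symm
          have : Lf c 0 = 1 := by simp [Lf]
          rw [this]
          exact tendsto_const_nhds.congr' heq
      | 1, _ =>
        constructor
        · exact continuousOn_const.congr fun t ht => hS1 t ht
        · have heq : (fun t : ℝ => (0:ℝ)) =ᶠ[atTop] S 1 := by
            filter_upwards [eventually_ge_atTop (0:ℝ)] with t ht using (hS1 t ht).symm
          have : Lf c 1 = 0 := by simp [Lf]
          rw [this]
          exact tendsto_const_nhds.congr' heq
      | (n + 2), ih =>
        have ha : (0:ℝ) < (n : ℝ) + 2 := by positivity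
        have hg : ContinuousOn (fun s => ∑ k ∈ range (n + 1), S k s * S (n - k) s)
            (Set.Ici 0) := by
          apply continuousOn_finset_sum
          intro k hk
          have hk' := Finset.mem_range.mp hk
          exact ((ih k (by omega)).1).mul ((ih (n - k) (by omega)).1)
        have hB : Tendsto (fun s => ∑ k ∈ range (n + 1), S k s * S (n - k) s) atTop
            (nhds (∑ k ∈ range (n + 1), Lf c k * Lf c (n - k))) :=
          tendsto_finset_sum _ fun k hk =>
            ((ih k (by have := Finset.mem_range.mp hk; omega)).2).mul
              ((ih (n - k) (by omega)).2)
        set B : ℝ := ∑ k ∈ range (n + 1), Lf c k * Lf c (n - k) with hBdef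
        have havg := exp_avg_aux ((n : ℝ) + 2) B ha _ hg hB
        have hform : ∀ t : ℝ, 0 ≤ t → S (n + 2) t
            = (4 * ((n : ℝ) + 2) / (1 + C) ^ 3) *
              (Real.exp (-(((n : ℝ) + 2) * t)) * ∫ s in (0:ℝ)..t,
                Real.exp (((n : ℝ) + 2) * s) * ∑ k ∈ range (n + 1), S k s * S (n - k) s) := by
          intro t ht
          have h0 : S (n + 2) t = Real.exp (-((n + 2 : ℕ) : ℝ) * t) *
              (4 * ((n + 2 : ℕ) : ℝ) / (1 + C) ^ 3) *
              ∫ s in (0:ℝ)..t, Real.exp (((n + 2 : ℕ) : ℝ) * s) *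
                ∑ k ∈ range (n + 1), S k s * S (n - k) s :=
            hSrec (n + 2) (by omega) t ht
          have hcast : ((n + 2 : ℕ) : ℝ) = (n : ℝ) + 2 := by push_cast; ring
          rw [h0, hcast, neg_mul,
            mul_comm (Real.exp (-(((n : ℝ) + 2) * t))) (4 * ((n : ℝ) + 2) / (1 + C) ^ 3),
            mul_assoc]
        have hprim := cont_prim_aux
          (fun s => Real.exp (((n : ℝ) + 2) * s) * ∑ k ∈ range (n + 1), S k s * S (n - k) s)
          ((Continuous.continuousOn (by fun_prop)).mul hg)
        have hcont : ContinuousOn (S (n + 2)) (Set.Ici 0) := by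
          exact (continuousOn_const.mul
            (((by fun_prop : Continuous fun t : ℝ =>
              Real.exp (-(((n : ℝ) + 2) * t))).continuousOn).mul hprim)).congr
            fun t ht => hform t ht
        refine ⟨hcont, ?_⟩
        have hT : Tendsto (S (n + 2)) atTop
            (nhds ((4 * ((n : ℝ) + 2) / (1 + C) ^ 3) * (B / ((n : ℝ) + 2)))) := by
          apply Tendsto.congr' _ (havg.const_mul (4 * ((n : ℝ) + 2) / (1 + C) ^ 3))
          filter_upwards [eventually_ge_atTop (0:ℝ)] with t ht using (hform t ht).symm
        have hval : (4 * ((n : ℝ) + 2) / (1 + C) ^ 3) * (B / ((n : ℝ) + 2)) = Lf c (n + 2) := by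
          rw [Lf_rec c (n + 2) (by omega)]
          simp only [show n + 2 - 1 = n + 1 from rfl, show n + 2 - 2 = n from rfl, ← hBdef, hc]
          have hn2 : ((n : ℝ) + 2) ≠ 0 := by positivity
          field_simp
          ring
        exact hval ▸ hT
  refine ⟨Lf c, fun l => (key l).2, by simp [Lf], by simp [Lf],
    fun l hl => Lf_rec c l hl, fun m => Lf_even c m,
    fun l hl => Lf_odd c l (Nat.odd_iff.mp hl)⟩
end

section
/- Fix p, q > N-1 and let V(τ) := 2(q-p)∑_i log sin(τ_i/2) + 2(p+1-N)∑_i log sin(τ_i) + 2∑_{i<j}[ log sin((τ_i-τ_j)/2) + log sin((τ_i+τ_j)/2) ] on the open set {π > τ_1 > ... > τ_N > 0}. Then the gradient system dτ/dt = grad V(τ) is, under the change of variables x_i = cos τ_i, equivalent to the system dx_i/dt = (p-q) - (p+q)x_i + 2∑_{j≠i}(1 - x_i x_j)/(x_i - x_j). -/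
/-!
Differentiating the three sums of `V` gives
`∂ᵢV = (q - p) cot(τᵢ/2) + 2(p + 1 - N) cot τᵢ + ∑_{j ≠ i} (cot((τᵢ - τⱼ)/2) + cot((τᵢ + τⱼ)/2))`,
each pair term contributing to both of its indices. As `cos` is a diffeomorphism of `(0, π)` onto
`(-1, 1)`, `τᵢ' = ∂ᵢV` is equivalent to `(cos τᵢ)' = -sin τᵢ · ∂ᵢV`, and the latter is the stated
right-hand side by `sin τ cot(τ/2) = 1 + cos τ`, `cot((a - b)/2) + cot((a + b)/2) =
2 sin a / (cos b - cos a)` and `sin² a = 1 - cos² a`.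
-/

open Finset Real Filter Topology

lemma cot_half_eq {a : ℝ} (h : sin a ≠ 0) : cot (a / 2) = (1 + cos a) / sin a := by
  obtain ⟨u, rfl⟩ : ∃ u, a = 2 * u := ⟨a / 2, by ring⟩
  rw [sin_two_mul] at h
  obtain ⟨hs, hc⟩ := mul_ne_zero_iff.mp h
  rw [mul_div_cancel_left₀ u two_ne_zero, cot_eq_cos_div_sin, sin_two_mul, cos_two_mul]
  field_simp
  ring

lemma cot_sub_half_add_cot_add_half {a b : ℝ} (hsub : sin ((a - b) / 2) ≠ 0)
    (hadd : sin ((a + b) / 2) ≠ 0) :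
    cot ((a - b) / 2) + cot ((a + b) / 2) = 2 * sin a / (cos b - cos a) := by
  have hab : cos b - cos a = 2 * sin ((a + b) / 2) * sin ((a - b) / 2) := by
    rw [← neg_sub, cos_sub_cos]; ring
  have ha : a = (a + b) / 2 + (a - b) / 2 := by ring
  rw [hab, cot_eq_cos_div_sin, cot_eq_cos_div_sin, ha, sin_add, ← ha]
  field_simp

lemma sin_half_add_pos {a b : ℝ} (ha : a ∈ Set.Ioo 0 π) (hb : b ∈ Set.Ioo 0 π) :
    0 < sin ((a + b) / 2) :=
  sin_pos_of_pos_of_lt_pi (by linarith [ha.1, hb.1]) (by linarith [ha.2, hb.2])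

lemma sin_half_sub_ne_zero {a b : ℝ} (ha : a ∈ Set.Ioo 0 π) (hb : b ∈ Set.Ioo 0 π)
    (hab : a ≠ b) : sin ((a - b) / 2) ≠ 0 := by
  rw [Ne, sin_eq_zero_iff_of_lt_of_lt (by linarith [ha.1, hb.2, pi_pos])
    (by linarith [ha.2, hb.1, pi_pos])]
  exact fun h => hab (by linarith)

lemma neg_sin_mul_cot_half_sub_add_cot_half_add {a b : ℝ} (ha : a ∈ Set.Ioo 0 π)
    (hb : b ∈ Set.Ioo 0 π) (hab : a ≠ b) :
    -sin a * (cot ((a - b) / 2) + cot ((a + b) / 2))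
      = 2 * (1 - cos a * cos b) / (cos a - cos b) - 2 * cos a := by
  have hcos : cos a - cos b ≠ 0 :=
    sub_ne_zero.mpr fun h => hab (injOn_cos (Set.Ioo_subset_Icc_self ha)
      (Set.Ioo_subset_Icc_self hb) h)
  rw [cot_sub_half_add_cot_add_half (sin_half_sub_ne_zero ha hb hab)
    (sin_half_add_pos ha hb).ne', ← neg_sub (cos a)]
  field_simp
  linear_combination sin_sq_add_cos_sq a

lemma hasDerivAt_iff_hasDerivAt_cos_comp {f : ℝ → ℝ} {t d : ℝ}
    (hf : ∀ᶠ s in 𝓝 t, f s ∈ Set.Icc 0 π) (ht : f t ∈ Set.Ioo 0 π) :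
    HasDerivAt f d t ↔ HasDerivAt (fun s => cos (f s)) (-sin (f t) * d) t := by
  refine ⟨fun h => by simpa [mul_comm] using h.cos, fun h => ?_⟩
  have hsin : 0 < sin (f t) := sin_pos_of_pos_of_lt_pi ht.1 ht.2
  have hcos_gt : -1 < cos (f t) := by
    simpa using cos_lt_cos_of_nonneg_of_le_pi ht.1.le le_rfl ht.2
  have hcos_lt : cos (f t) < 1 := by
    simpa using cos_lt_cos_of_nonneg_of_le_pi le_rfl ht.2.le ht.1
  have h' := (hasDerivAt_arccos hcos_gt.ne' hcos_lt.ne).comp t h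
  rw [← sin_arccos, arccos_cos ht.1.le ht.2.le] at h'
  refine (h'.congr_of_eventuallyEq ?_).congr_deriv (by field_simp)
  filter_upwards [hf] with s hs using (arccos_cos hs.1 hs.2).symm

lemma hasDerivAt_log_sin {y : ℝ} (h : sin y ≠ 0) :
    HasDerivAt (fun y => log (sin y)) (cot y) y := by
  simpa [cot_eq_cos_div_sin] using (hasDerivAt_sin y).log h

lemma hasDerivAt_log_sin_half {y : ℝ} (h : sin (y / 2) ≠ 0) :
    HasDerivAt (fun y => log (sin (y / 2))) (cot (y / 2) / 2) y := by
  simpa [cot_eq_cos_div_sin, div_eq_mul_inv, mul_comm, mul_left_comm, mul_assoc]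
    using ((hasDerivAt_id y).div_const 2).sin.log h

section Pi

open ContinuousLinearMap

variable {ι : Type*} [Fintype ι]

lemma hasFDerivAt_sum_comp_apply {φ φ' : ℝ → ℝ} {x : ι → ℝ}
    (h : ∀ i, HasDerivAt φ (φ' (x i)) (x i)) :
    HasFDerivAt (fun x : ι → ℝ => ∑ i, φ (x i))
      (∑ i, φ' (x i) • (proj i : (ι → ℝ) →L[ℝ] ℝ)) x :=
  HasFDerivAt.fun_sum fun i _ => (h i).comp_hasFDerivAt x (hasFDerivAt_apply i x)

variable [LinearOrder ι]

lemma hasFDerivAt_sum_lt_pairs {φ φ' : ℝ → ℝ} {x : ι → ℝ}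
    (hsub : ∀ j k, j < k → HasDerivAt φ (φ' (x j - x k)) (x j - x k))
    (hadd : ∀ j k, j < k → HasDerivAt φ (φ' (x j + x k)) (x j + x k)) :
    HasFDerivAt
      (fun x : ι → ℝ => ∑ pr ∈ univ.filter (fun pr : ι × ι => pr.1 < pr.2),
        (φ (x pr.1 - x pr.2) + φ (x pr.1 + x pr.2)))
      (∑ pr ∈ univ.filter (fun pr : ι × ι => pr.1 < pr.2),
        (φ' (x pr.1 - x pr.2) • ((proj pr.1 : (ι → ℝ) →L[ℝ] ℝ) - proj pr.2)
          + φ' (x pr.1 + x pr.2) • ((proj pr.1 : (ι → ℝ) →L[ℝ] ℝ) + proj pr.2))) x := by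
  refine HasFDerivAt.fun_sum fun pr hpr => ?_
  have hlt : pr.1 < pr.2 := (mem_filter.mp hpr).2
  have h1 := hasFDerivAt_apply (𝕜 := ℝ) pr.1 x
  have h2 := hasFDerivAt_apply (𝕜 := ℝ) pr.2 x
  exact ((hsub _ _ hlt).comp_hasFDerivAt x (h1.sub h2)).add
    ((hadd _ _ hlt).comp_hasFDerivAt x (h1.add h2))

lemma sum_lt_pairs_single_mul {R : Type*} [CommSemiring R] (a : ι → ι → R) (i : ι) :
    ∑ pr ∈ univ.filter (fun pr : ι × ι => pr.1 < pr.2),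
      ((Pi.single i 1 : ι → R) pr.1 * a pr.1 pr.2 + (Pi.single i 1 : ι → R) pr.2 * a pr.2 pr.1)
      = ∑ k ∈ univ.erase i, a i k := by
  simp only [sum_filter, Fintype.sum_prod_type, Pi.single_apply, sum_add_distrib, ite_mul,
    one_mul, zero_mul]
  rw [sum_comm (f := fun j k => if j < k then (if k = i then a k j else 0) else 0),
    Fintype.sum_eq_single (f := fun j => ∑ k, if j < k then (if j = i then a j k else 0) else 0) i
      (fun j hj => by simp [hj]),
    Fintype.sum_eq_single (f := fun k => ∑ j, if j < k then (if k = i then a k j else 0) else 0) i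
      (fun k hk => by simp [hk]),
    ← sum_add_distrib, ← filter_ne', sum_filter]
  refine sum_congr rfl fun k _ => ?_
  rcases lt_trichotomy k i with h | rfl | h
  · simp [h, h.not_gt, h.ne]
  · simp
  · simp [h, h.not_gt, h.ne']

end Pi

noncomputable def potential {N : ℕ} (p q : ℝ) (x : Fin N → ℝ) : ℝ :=
  2 * (q - p) * ∑ i : Fin N, Real.log (Real.sin (x i / 2))
    + 2 * (p + 1 - N) * ∑ i : Fin N, Real.log (Real.sin (x i))
    + 2 * ∑ pr ∈ (univ : Finset (Fin N × Fin N)).filter (fun pr => pr.1 < pr.2),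
        (Real.log (Real.sin ((x pr.1 - x pr.2) / 2))
          + Real.log (Real.sin ((x pr.1 + x pr.2) / 2)))

noncomputable def potentialGrad {N : ℕ} (p q : ℝ) (x : Fin N → ℝ) (i : Fin N) : ℝ :=
  (q - p) * cot (x i / 2) + 2 * (p + 1 - N) * cot (x i)
    + ∑ j ∈ univ.erase i, (cot ((x i - x j) / 2) + cot ((x i + x j) / 2))

section Potential

variable {N : ℕ} (p q : ℝ) {x : Fin N → ℝ} (hx : ∀ i, x i ∈ Set.Ioo 0 π)
  (hinj : Function.Injective x)
include hx hinj

lemma fderiv_potential_apply_single (i : Fin N) :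
    fderiv ℝ (potential p q) x (Pi.single i 1) = potentialGrad p q x i := by
  have h1 := hasFDerivAt_sum_comp_apply (x := x) (φ' := fun y => cot (y / 2) / 2)
    fun j => hasDerivAt_log_sin_half
      (sin_pos_of_pos_of_lt_pi (by linarith [(hx j).1]) (by linarith [(hx j).2, pi_pos])).ne'
  have h2 := hasFDerivAt_sum_comp_apply (x := x) (φ' := cot) fun j => hasDerivAt_log_sin
    (sin_pos_of_pos_of_lt_pi (hx j).1 (hx j).2).ne'
  have h3 := hasFDerivAt_sum_lt_pairs (x := x) (φ' := fun y => cot (y / 2) / 2)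
    (fun j k hjk => hasDerivAt_log_sin_half (sin_half_sub_ne_zero (hx j) (hx k) (hinj.ne hjk.ne)))
    (fun j k _ => hasDerivAt_log_sin_half (sin_half_add_pos (hx j) (hx k)).ne')
  have hV := ((h1.const_mul (2 * (q - p))).fun_add (h2.const_mul (2 * (p + 1 - N)))).fun_add
    (h3.const_mul 2)
  -- `cot` is odd, so a pair term contributes the same expression to both of its indices
  have hterm (j k : Fin N) :
      cot ((x j - x k) / 2) / 2 * ((Pi.single i 1 : Fin N → ℝ) j - (Pi.single i 1 : Fin N → ℝ) k)
        + cot ((x j + x k) / 2) / 2 * ((Pi.single i 1 : Fin N → ℝ) j + (Pi.single i 1 : Fin N → ℝ) k)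
      = (Pi.single i 1 : Fin N → ℝ) j * ((cot ((x j - x k) / 2) + cot ((x j + x k) / 2)) / 2)
        + (Pi.single i 1 : Fin N → ℝ) k * ((cot ((x k - x j) / 2) + cot ((x k + x j) / 2)) / 2) := by
    rw [← neg_sub, neg_div, cot_eq_cos_div_sin (-_), cos_neg, sin_neg, div_neg,
      ← cot_eq_cos_div_sin, add_comm (x k)]
    ring
  unfold potential
  rw [hV.fderiv]
  simp only [add_apply, smul_apply, _root_.sum_apply, sub_apply, ContinuousLinearMap.proj_apply,
    smul_eq_mul, hterm]
  rw [sum_lt_pairs_single_mul (fun j k => (cot ((x j - x k) / 2) + cot ((x j + x k) / 2)) / 2)]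
  simp only [Pi.single_apply, mul_ite, mul_one, mul_zero, sum_ite_eq', mem_univ, if_true,
    potentialGrad, mul_sum]
  congr 1
  · ring
  · exact sum_congr rfl fun j _ => by ring

lemma neg_sin_mul_potentialGrad (i : Fin N) :
    -sin (x i) * potentialGrad p q x i
      = (p - q) - (p + q) * cos (x i)
        + 2 * ∑ j ∈ univ.erase i, (1 - cos (x i) * cos (x j)) / (cos (x i) - cos (x j)) := by
  have hsin : sin (x i) ≠ 0 := (sin_pos_of_pos_of_lt_pi (hx i).1 (hx i).2).ne'
  have hpair : ∀ j ∈ univ.erase i, -sin (x i) * (cot ((x i - x j) / 2) + cot ((x i + x j) / 2))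
      = 2 * (1 - cos (x i) * cos (x j)) / (cos (x i) - cos (x j)) - 2 * cos (x i) :=
    fun j hj => neg_sin_mul_cot_half_sub_add_cot_half_add (hx i) (hx j)
      (hinj.ne (ne_of_mem_erase hj).symm)
  have hcard : ((univ.erase i).card : ℝ) = N - 1 := by
    rw [card_erase_of_mem (mem_univ i), card_univ, Fintype.card_fin, Nat.cast_pred i.pos]
  rw [potentialGrad, mul_add, mul_add, mul_sum, sum_congr rfl hpair, sum_sub_distrib, sum_const,
    nsmul_eq_mul, hcard, cot_half_eq hsin, cot_eq_cos_div_sin, mul_sum]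
  field_simp
  ring

end Potential

theorem stmt18_general {N : ℕ} (p q : ℝ)
    (V : (Fin N → ℝ) → ℝ)
    (hV : ∀ τ : Fin N → ℝ,
      V τ = 2 * (q - p) * ∑ i : Fin N, Real.log (Real.sin (τ i / 2))
        + 2 * (p + 1 - N) * ∑ i : Fin N, Real.log (Real.sin (τ i))
        + 2 * ∑ pr ∈ (univ : Finset (Fin N × Fin N)).filter (fun pr => pr.1 < pr.2),
            (Real.log (Real.sin ((τ pr.1 - τ pr.2) / 2))
              + Real.log (Real.sin ((τ pr.1 + τ pr.2) / 2))))
    (τ : ℝ → Fin N → ℝ)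
    (hrange : ∀ (t : ℝ) (i : Fin N), 0 < τ t i ∧ τ t i < Real.pi)
    (hord : ∀ (t : ℝ) (i j : Fin N), i < j → τ t j < τ t i) :
    (∀ (t : ℝ) (i : Fin N),
        HasDerivAt (fun s => τ s i) (fderiv ℝ V (τ t) (Pi.single i 1)) t)
      ↔
    (∀ (t : ℝ) (i : Fin N),
        HasDerivAt (fun s => Real.cos (τ s i))
          ((p - q) - (p + q) * Real.cos (τ t i)
            + 2 * ∑ j ∈ (univ : Finset (Fin N)).erase i,
                (1 - Real.cos (τ t i) * Real.cos (τ t j))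
                  / (Real.cos (τ t i) - Real.cos (τ t j))) t) := by
  obtain rfl : V = potential p q := funext hV
  refine forall₂_congr fun t i => ?_
  have hx : ∀ j, τ t j ∈ Set.Ioo 0 π := hrange t
  have hinj : Function.Injective (τ t) := StrictAnti.injective (hord t)
  rw [fderiv_potential_apply_single p q hx hinj, ← neg_sin_mul_potentialGrad p q hx hinj]
  exact hasDerivAt_iff_hasDerivAt_cos_comp
    (.of_forall fun s => Set.Ioo_subset_Icc_self (hrange s i)) (hrange t i)

theorem stmt18 {N : ℕ} (p q : ℝ) (hp : (N : ℝ) - 1 < p) (hq : (N : ℝ) - 1 < q)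
    (V : (Fin N → ℝ) → ℝ)
    (hV : ∀ τ : Fin N → ℝ,
      V τ = 2 * (q - p) * ∑ i : Fin N, Real.log (Real.sin (τ i / 2))
        + 2 * (p + 1 - N) * ∑ i : Fin N, Real.log (Real.sin (τ i))
        + 2 * ∑ pr ∈ (univ : Finset (Fin N × Fin N)).filter (fun pr => pr.1 < pr.2),
            (Real.log (Real.sin ((τ pr.1 - τ pr.2) / 2))
              + Real.log (Real.sin ((τ pr.1 + τ pr.2) / 2))))
    (τ : ℝ → Fin N → ℝ)
    (hrange : ∀ (t : ℝ) (i : Fin N), 0 < τ t i ∧ τ t i < Real.pi)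
    (hord : ∀ (t : ℝ) (i j : Fin N), i < j → τ t j < τ t i) :
    (∀ (t : ℝ) (i : Fin N),
        HasDerivAt (fun s => τ s i) (fderiv ℝ V (τ t) (Pi.single i 1)) t)
      ↔
    (∀ (t : ℝ) (i : Fin N),
        HasDerivAt (fun s => Real.cos (τ s i))
          ((p - q) - (p + q) * Real.cos (τ t i)
            + 2 * ∑ j ∈ (univ : Finset (Fin N)).erase i,
                (1 - Real.cos (τ t i) * Real.cos (τ t j))
                  / (Real.cos (τ t i) - Real.cos (τ t j))) t) :=
  stmt18_general p q V hV τ hrange hord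
end
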